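/- arXiv:1105.5996 — 2 statements merged into one kernel-verified Lean document; each statement's English description precedes it below -/
import Mathlib

section
/- Let A be a self-adjoint operator on L²(ℝⁿ), λ ∈ ℝ, ε > 0, and suppose for some μ ≥ 1 and all 0 < ε ≤ 1: ‖⟨x⟩^{-1/2-ϵ}(A - λ ± iε)^{-1}⟨x⟩^{-1/2-ϵ}‖ ≤ C μ and ‖(A - λ ± iε)^{-1}⟨x⟩^{-1/2-ϵ}‖ ≤ C μ^{1/2} ε^{-1/2}. Then for every 0 ≤ ν ≤ 1, ‖⟨x⟩^{-ν/2-ϵ}(A - λ ± iε)^{-1}⟨x⟩^{-1/2-ϵ}‖ ≤ C' μ^{(ν+1)/2} ε^{(ν-1)/2}, obtained by splitting the weight at ⟨x⟩ = M with M = μ/ε. -/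
open MeasureTheory Set Complex ENNReal

noncomputable def jbracket8 (n : ℕ) (s : ℝ) (x : EuclideanSpace ℝ (Fin n)) : ℝ :=
  (1 + ‖x‖ ^ 2) ^ (s / 2)

def wOpBound8 (n : ℕ) (sout sin : ℝ)
    (T : Lp ℂ 2 (volume : Measure (EuclideanSpace ℝ (Fin n))) →L[ℂ]
      Lp ℂ 2 (volume : Measure (EuclideanSpace ℝ (Fin n)))) (M : ℝ) : Prop :=
  ∀ u f : Lp ℂ 2 (volume : Measure (EuclideanSpace ℝ (Fin n))),
    (u : EuclideanSpace ℝ (Fin n) → ℂ)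
        =ᵐ[volume] (fun x => (jbracket8 n sin x : ℂ) * (f : EuclideanSpace ℝ (Fin n) → ℂ) x) →
    eLpNorm (fun x => (jbracket8 n sout x : ℂ)
        * ((T u : Lp ℂ 2 (volume : Measure (EuclideanSpace ℝ (Fin n))))
            : EuclideanSpace ℝ (Fin n) → ℂ) x) 2 volume
      ≤ ENNReal.ofReal M * eLpNorm (f : EuclideanSpace ℝ (Fin n) → ℂ) 2 volume

/-!
The weight `⟨x⟩^{-ν/2-ϵ}` is dominated by `M^{(1-ν)/2} ⟨x⟩^{-1/2-ϵ}` where `⟨x⟩ ≤ M` and by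
`M^{-ν/2}` where `⟨x⟩ > M`. Each piece is controlled by one of the two hypotheses, and the choice
`M = (με)⁻¹` makes both contributions equal to `C μ^{(ν+1)/2} ε^{(ν-1)/2}`.
-/

theorem Real.rpow_neg_add_le_split {w M a b c : ℝ} (hw : 1 ≤ w) (hM : 0 < M) (ha : 0 ≤ a)
    (hab : a ≤ b) (hc : 0 ≤ c) :
    w ^ (-(a + c)) ≤ M ^ (b - a) * w ^ (-(b + c)) + M ^ (-a) := by
  have hw₀ : 0 < w := one_pos.trans_le hw
  rcases le_or_gt w M with hwM | hMw
  · have hsplit : w ^ (-(a + c)) = w ^ (b - a) * w ^ (-(b + c)) := by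
      rw [← Real.rpow_add hw₀]; ring_nf
    have hfar : w ^ (b - a) * w ^ (-(b + c)) ≤ M ^ (b - a) * w ^ (-(b + c)) :=
      mul_le_mul_of_nonneg_right (Real.rpow_le_rpow hw₀.le hwM (by linarith)) (by positivity)
    have : 0 ≤ M ^ (-a) := by positivity
    linarith
  · have hc' : w ^ (-(a + c)) ≤ w ^ (-a) := Real.rpow_le_rpow_of_exponent_le hw (by linarith)
    have hnear : w ^ (-a) ≤ M ^ (-a) := Real.rpow_le_rpow_of_nonpos hM hMw.le (by linarith)
    have : 0 ≤ M ^ (b - a) * w ^ (-(b + c)) := by positivity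
    linarith

theorem eLpNorm_le_add_of_norm_le {α E F G : Type*} [MeasurableSpace α] {μ : Measure α}
    [NormedAddCommGroup E] [NormedAddCommGroup F] [NormedAddCommGroup G] {p : ℝ≥0∞}
    (hp : 1 ≤ p) {f : α → E} {g₁ : α → F} {g₂ : α → G} {a b : ℝ} (ha : 0 ≤ a) (hb : 0 ≤ b)
    (hg₁ : AEStronglyMeasurable g₁ μ) (hg₂ : AEStronglyMeasurable g₂ μ)
    (h : ∀ᵐ x ∂μ, ‖f x‖ ≤ a * ‖g₁ x‖ + b * ‖g₂ x‖) :
    eLpNorm f p μ ≤ ENNReal.ofReal a * eLpNorm g₁ p μ + ENNReal.ofReal b * eLpNorm g₂ p μ := by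
  calc eLpNorm f p μ ≤ eLpNorm ((a • fun x => ‖g₁ x‖) + b • fun x => ‖g₂ x‖) p μ :=
        eLpNorm_mono_ae_real h
    _ ≤ eLpNorm (a • fun x => ‖g₁ x‖) p μ + eLpNorm (b • fun x => ‖g₂ x‖) p μ :=
        eLpNorm_add_le (hg₁.norm.const_smul a) (hg₂.norm.const_smul b) hp
    _ = ENNReal.ofReal a * eLpNorm g₁ p μ + ENNReal.ofReal b * eLpNorm g₂ p μ := by
        rw [eLpNorm_const_smul, eLpNorm_const_smul, eLpNorm_norm, eLpNorm_norm,
          Real.enorm_eq_ofReal ha, Real.enorm_eq_ofReal hb]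

section Weights

variable {n : ℕ}

theorem jbracket8_eq_rpow (s : ℝ) (x : EuclideanSpace ℝ (Fin n)) :
    jbracket8 n s x = jbracket8 n 1 x ^ s := by
  rw [jbracket8, jbracket8, ← Real.rpow_mul (by positivity)]
  ring_nf

theorem jbracket8_nonneg (s : ℝ) (x : EuclideanSpace ℝ (Fin n)) : 0 ≤ jbracket8 n s x := by
  unfold jbracket8; positivity

theorem one_le_jbracket8_one (x : EuclideanSpace ℝ (Fin n)) : 1 ≤ jbracket8 n 1 x :=
  Real.one_le_rpow (by nlinarith [sq_nonneg ‖x‖]) (by norm_num)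

theorem continuous_jbracket8 (s : ℝ) : Continuous (jbracket8 n s) :=
  (continuous_const.add (continuous_norm.pow 2)).rpow_const fun x => 
    Or.inl (by positivity : (0 : ℝ) < 1 + ‖x‖ ^ 2).ne'

theorem jbracket8_neg_add_le_split {M a b c : ℝ} (hM : 0 < M) (ha : 0 ≤ a) (hab : a ≤ b)
    (hc : 0 ≤ c) (x : EuclideanSpace ℝ (Fin n)) :
    jbracket8 n (-(a + c)) x
      ≤ M ^ (b - a) * jbracket8 n (-(b + c)) x + M ^ (-a) * jbracket8 n 0 x := by
  rw [jbracket8_eq_rpow (-(a + c)), jbracket8_eq_rpow (-(b + c)), jbracket8_eq_rpow 0,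
    Real.rpow_zero, mul_one]
  exact Real.rpow_neg_add_le_split (one_le_jbracket8_one x) hM ha hab hc

theorem wOpBound8_of_le_add {s s₁ s₂ sin a b K₁ K₂ : ℝ}
    {T : Lp ℂ 2 (volume : Measure (EuclideanSpace ℝ (Fin n))) →L[ℂ]
      Lp ℂ 2 (volume : Measure (EuclideanSpace ℝ (Fin n)))}
    (ha : 0 ≤ a) (hb : 0 ≤ b) (hK₁ : 0 ≤ K₁) (hK₂ : 0 ≤ K₂)
    (hw : ∀ x, jbracket8 n s x ≤ a * jbracket8 n s₁ x + b * jbracket8 n s₂ x)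
    (h₁ : wOpBound8 n s₁ sin T K₁) (h₂ : wOpBound8 n s₂ sin T K₂) :
    wOpBound8 n s sin T (a * K₁ + b * K₂) := by
  intro u f hu
  set g : EuclideanSpace ℝ (Fin n) → ℂ :=
    ⇑(T u : Lp ℂ 2 (volume : Measure (EuclideanSpace ℝ (Fin n))))
  have hg : AEStronglyMeasurable g volume := Lp.aestronglyMeasurable _
  have hweighted (t : ℝ) : AEStronglyMeasurable (fun x => (jbracket8 n t x : ℂ) * g x) volume :=
    ((Complex.continuous_ofReal.comp (continuous_jbracket8 t)).aestronglyMeasurable).mul hg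
  have hnorm (t : ℝ) (x) : ‖(jbracket8 n t x : ℂ) * g x‖ = jbracket8 n t x * ‖g x‖ := by
    rw [norm_mul, norm_real, Real.norm_of_nonneg (jbracket8_nonneg t x)]
  have hpoint : ∀ᵐ x, ‖(jbracket8 n s x : ℂ) * g x‖
      ≤ a * ‖(jbracket8 n s₁ x : ℂ) * g x‖ + b * ‖(jbracket8 n s₂ x : ℂ) * g x‖ :=
    .of_forall fun x => by
      rw [hnorm, hnorm, hnorm, ← mul_assoc, ← mul_assoc, ← add_mul]
      exact mul_le_mul_of_nonneg_right (hw x) (norm_nonneg _)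
  calc _ ≤ ENNReal.ofReal a * eLpNorm (fun x => (jbracket8 n s₁ x : ℂ) * g x) 2 volume
          + ENNReal.ofReal b * eLpNorm (fun x => (jbracket8 n s₂ x : ℂ) * g x) 2 volume :=
        eLpNorm_le_add_of_norm_le (by norm_num) ha hb (hweighted s₁) (hweighted s₂) hpoint
    _ ≤ ENNReal.ofReal a * (ENNReal.ofReal K₁ * eLpNorm (f : _ → ℂ) 2 volume)
          + ENNReal.ofReal b * (ENNReal.ofReal K₂ * eLpNorm (f : _ → ℂ) 2 volume) := by
        gcongr
        exacts [h₁ u f hu, h₂ u f hu]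
    _ = ENNReal.ofReal (a * K₁ + b * K₂) * eLpNorm (f : _ → ℂ) 2 volume := by
        rw [ENNReal.ofReal_add (by positivity) (by positivity), ENNReal.ofReal_mul ha,
          ENNReal.ofReal_mul hb]
        ring

end Weights

theorem resolvent_interpolation_coeff {μ ε ν C : ℝ} (hμ : 0 < μ) (hε : 0 < ε) :
    (μ * ε)⁻¹ ^ (1 / 2 - ν / 2) * (C * μ)
        + (μ * ε)⁻¹ ^ (-(ν / 2)) * (C * μ ^ ((1 : ℝ) / 2) * ε ^ (-(1 : ℝ) / 2))
      = 2 * C * μ ^ ((ν + 1) / 2) * ε ^ ((ν - 1) / 2) := by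
  rw [Real.inv_rpow (by positivity), Real.inv_rpow (by positivity), ← Real.rpow_neg (by positivity),
    ← Real.rpow_neg (by positivity), Real.mul_rpow hμ.le hε.le, Real.mul_rpow hμ.le hε.le]
  have hμ₁ : μ ^ (-(1 / 2 - ν / 2)) * μ = μ ^ ((ν + 1) / 2) := by
    rw [← Real.rpow_add_one hμ.ne']; ring_nf
  have hμ₂ : μ ^ (-(-(ν / 2))) * μ ^ ((1 : ℝ) / 2) = μ ^ ((ν + 1) / 2) := by
    rw [← Real.rpow_add hμ]; ring_nf
  have hε₁ : ε ^ (-(1 / 2 - ν / 2)) = ε ^ ((ν - 1) / 2) := by ring_nf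
  have hε₂ : ε ^ (-(-(ν / 2))) * ε ^ (-(1 : ℝ) / 2) = ε ^ ((ν - 1) / 2) := by
    rw [← Real.rpow_add hε]; ring_nf
  linear_combination (C * ε ^ (-(1 / 2 - ν / 2))) * hμ₁ + C * μ ^ ((ν + 1) / 2) * hε₁
    + (C * ε ^ (-(-(ν / 2))) * ε ^ (-(1 : ℝ) / 2)) * hμ₂ + C * μ ^ ((ν + 1) / 2) * hε₂

theorem stmt_8_general (n : ℕ)
    (A : Lp ℂ 2 (volume : Measure (EuclideanSpace ℝ (Fin n))) →L[ℂ]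
      Lp ℂ 2 (volume : Measure (EuclideanSpace ℝ (Fin n))))
    (lam ϵ μ C : ℝ) (hϵ : 0 < ϵ) (hμ : 1 ≤ μ) (hC : 0 < C)
    (h1 : ∀ σ : ℝ, σ = 1 ∨ σ = -1 → ∀ ε ∈ Ioc (0 : ℝ) 1,
      wOpBound8 n (-(1 / 2 + ϵ)) (-(1 / 2 + ϵ))
        (Ring.inverse (A - (((lam : ℂ) + σ * I * ε) : ℂ) • 1)) (C * μ))
    (h2 : ∀ σ : ℝ, σ = 1 ∨ σ = -1 → ∀ ε ∈ Ioc (0 : ℝ) 1,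
      wOpBound8 n 0 (-(1 / 2 + ϵ))
        (Ring.inverse (A - (((lam : ℂ) + σ * I * ε) : ℂ) • 1))
        (C * μ ^ ((1 : ℝ) / 2) * ε ^ (-(1 : ℝ) / 2))) :
    ∃ C' : ℝ, 0 < C' ∧ ∀ ν ∈ Icc (0 : ℝ) 1, ∀ σ : ℝ, σ = 1 ∨ σ = -1 →
      ∀ ε ∈ Ioc (0 : ℝ) 1,
        wOpBound8 n (-(ν / 2 + ϵ)) (-(1 / 2 + ϵ))
          (Ring.inverse (A - (((lam : ℂ) + σ * I * ε) : ℂ) • 1))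
          (C' * μ ^ ((ν + 1) / 2) * ε ^ ((ν - 1) / 2)) := by
  refine ⟨2 * C, by positivity, fun ν ⟨hν₀, hν₁⟩ σ hσ ε hε => ?_⟩
  have hμ₀ : 0 < μ := one_pos.trans_le hμ
  have hε₀ : 0 < ε := hε.1
  have hM : 0 < (μ * ε)⁻¹ := by positivity
  have key := wOpBound8_of_le_add (by positivity) (by positivity) (by positivity) (by positivity)
    (jbracket8_neg_add_le_split (a := ν / 2) (b := 1 / 2) hM (by linarith) (by linarith) hϵ.le)
    (h1 σ hσ ε hε) (h2 σ hσ ε hε)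
  rwa [resolvent_interpolation_coeff hμ₀ hε₀] at key

/-- interpolation of weighted resolvent bounds.  If
`‖⟨x⟩^{-1/2-ϵ}(A-λ∓iε)⁻¹⟨x⟩^{-1/2-ϵ}‖ ≤ Cμ` and
`‖(A-λ∓iε)⁻¹⟨x⟩^{-1/2-ϵ}‖ ≤ Cμ^{1/2}ε^{-1/2}` for `0 < ε ≤ 1`, then for `0 ≤ ν ≤ 1`,
`‖⟨x⟩^{-ν/2-ϵ}(A-λ∓iε)⁻¹⟨x⟩^{-1/2-ϵ}‖ ≤ C'μ^{(ν+1)/2}ε^{(ν-1)/2}`. -/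
theorem stmt_8 (n : ℕ)
    (A : Lp ℂ 2 (volume : Measure (EuclideanSpace ℝ (Fin n))) →L[ℂ]
      Lp ℂ 2 (volume : Measure (EuclideanSpace ℝ (Fin n))))
    (hA : IsSelfAdjoint A) (lam ϵ μ C : ℝ) (hϵ : 0 < ϵ) (hμ : 1 ≤ μ) (hC : 0 < C)
    (h1 : ∀ σ : ℝ, σ = 1 ∨ σ = -1 → ∀ ε ∈ Ioc (0 : ℝ) 1,
      wOpBound8 n (-(1 / 2 + ϵ)) (-(1 / 2 + ϵ))
        (Ring.inverse (A - (((lam : ℂ) + σ * I * ε) : ℂ) • 1)) (C * μ))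
    (h2 : ∀ σ : ℝ, σ = 1 ∨ σ = -1 → ∀ ε ∈ Ioc (0 : ℝ) 1,
      wOpBound8 n 0 (-(1 / 2 + ϵ))
        (Ring.inverse (A - (((lam : ℂ) + σ * I * ε) : ℂ) • 1))
        (C * μ ^ ((1 : ℝ) / 2) * ε ^ (-(1 : ℝ) / 2))) :
    ∃ C' : ℝ, 0 < C' ∧ ∀ ν ∈ Icc (0 : ℝ) 1, ∀ σ : ℝ, σ = 1 ∨ σ = -1 →
      ∀ ε ∈ Ioc (0 : ℝ) 1,
        wOpBound8 n (-(ν / 2 + ϵ)) (-(1 / 2 + ϵ))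
          (Ring.inverse (A - (((lam : ℂ) + σ * I * ε) : ℂ) • 1))
          (C' * μ ^ ((ν + 1) / 2) * ε ^ ((ν - 1) / 2)) :=
  stmt_8_general n A lam ϵ μ C hϵ hμ hC h1 h2
end

section
/- Suppose K : [1,∞) × ℝ → ℂ satisfies |K(w,t)| ≤ C_{m,N} w^{m - (n-1)/2} |t|^{-m} (|t-w|^{-N} + |t+w|^{-N}) for all integers m, N ≥ 0 (with constants depending on m, N), uniformly in w ≥ 1, t ≠ 0. Then for every real s with 0 ≤ s ≤ (n-1)/2 one has |K(w,t)| ≤ C_s |t|^{-s} w^{s-(n-1)/2} for |t| ≥ 2w, and ∫_{-∞}^∞ |t|^{2s}|K(w,t)|² dt ≤ C w^{2s-n+1}. -/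
/-!
Near the light cone, `|t| ≤ 2w`, the bounds with `m = 0` and `N ∈ {0, 2}` together dominate
`|K(w,t)|` by `w^{-(n-1)/2}` times the two Cauchy weights `(1 + (t ∓ w)²)⁻¹`, and `|t|^{2s}` costs
at most `(2w)^{2s}`. Far from it, `|t| ≥ 2w ≥ w`, the factor `w^m |t|^{-m}` only decreases when `m`
increases, so the bound with `m = ⌈s⌉` implies the one with exponent `s`; with `N = 1` it is again
dominated by a Cauchy weight. Each weight has integral `π`.
-/

open MeasureTheory ENNReal

lemma rpow_sub_mul_rpow_neg_le {w T a s μ : ℝ} (hw : 0 < w) (hwT : w ≤ T) (hsμ : s ≤ μ) :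
    w ^ (μ - a) * T ^ (-μ) ≤ w ^ (s - a) * T ^ (-s) := by
  have hT : 0 < T := hw.trans_le hwT
  have hratio : w ^ (μ - s) * T ^ (-(μ - s)) ≤ 1 := by
    rw [Real.rpow_neg hT.le, ← div_eq_mul_inv, ← Real.div_rpow hw.le hT.le]
    exact Real.rpow_le_one (by positivity) ((div_le_one hT).2 hwT) (sub_nonneg.2 hsμ)
  calc w ^ (μ - a) * T ^ (-μ)
      = w ^ (s - a) * T ^ (-s) * (w ^ (μ - s) * T ^ (-(μ - s))) := by
        rw [show μ - a = (s - a) + (μ - s) by ring, show -μ = -s + -(μ - s) by ring,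
          Real.rpow_add hw, Real.rpow_add hT]
        ring
    _ ≤ w ^ (s - a) * T ^ (-s) := mul_le_of_le_one_right (by positivity) hratio

lemma min_one_abs_rpow_neg_two_le (x : ℝ) : min 1 (|x| ^ (-2 : ℝ)) ≤ 2 * (1 + x ^ 2)⁻¹ := by
  rcases le_or_gt (x ^ 2) 1 with hx | hx
  · calc min 1 (|x| ^ (-2 : ℝ)) ≤ 1 := min_le_left _ _
      _ ≤ 2 * (1 + x ^ 2)⁻¹ := by
        rw [← div_eq_mul_inv, le_div_iff₀ (by positivity)]; linarith
  · calc min 1 (|x| ^ (-2 : ℝ)) ≤ (x ^ 2)⁻¹ := by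
          rw [Real.rpow_neg (abs_nonneg x), Real.rpow_two, sq_abs]; exact min_le_right _ _
      _ ≤ 2 * (1 + x ^ 2)⁻¹ := by
        rw [← div_eq_mul_inv, ← one_div, div_le_div_iff₀ (by positivity) (by positivity)]
        linarith

lemma min_one_add_le_min_add_min {a b : ℝ} (ha : 0 ≤ a) (hb : 0 ≤ b) :
    min 1 (a + b) ≤ min 1 a + min 1 b := by
  simp only [min_def]; split_ifs <;> linarith

lemma inv_abs_sub_add_inv_abs_add_le {w t : ℝ} (hw : 0 < w) (ht : 2 * w ≤ |t|) :
    |t - w|⁻¹ + |t + w|⁻¹ ≤ 4 * |t|⁻¹ := by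
  have ht0 : 0 < |t| := by linarith
  have hsub : |t| / 2 ≤ |t - w| := by
    have := abs_sub_abs_le_abs_sub t w; rw [abs_of_pos hw] at this; linarith
  have hadd : |t| / 2 ≤ |t + w| := by
    have := abs_sub_abs_le_abs_sub t (-w)
    rw [abs_neg, abs_of_pos hw, sub_neg_eq_add] at this; linarith
  calc |t - w|⁻¹ + |t + w|⁻¹ ≤ (|t| / 2)⁻¹ + (|t| / 2)⁻¹ := by
        gcongr
    _ = 4 * |t|⁻¹ := by field_simp; norm_num

lemma inv_sq_le_three_mul_inv_one_add_sq {w t : ℝ} (hw : 1 ≤ w) (ht : 2 * w ≤ |t|) :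
    (t ^ 2)⁻¹ ≤ 3 * (1 + (t - w) ^ 2)⁻¹ := by
  have hsub : |t - w| ≤ 3 / 2 * |t| := by
    have := abs_sub t w; rw [abs_of_nonneg (by linarith : 0 ≤ w)] at this; linarith
  have hsq : (t - w) ^ 2 ≤ (3 / 2 * |t|) ^ 2 := by
    rw [← sq_abs (t - w)]; exact pow_le_pow_left₀ (abs_nonneg _) hsub 2
  have ht2 : 4 ≤ t ^ 2 := by nlinarith [sq_abs t]
  rw [← div_eq_mul_inv, ← one_div, div_le_div_iff₀ (by positivity) (by positivity)]
  nlinarith [sq_abs t]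

noncomputable def cauchyWeight (w t : ℝ) : ℝ := (1 + (t - w) ^ 2)⁻¹ + (1 + (t + w) ^ 2)⁻¹

lemma cauchyWeight_nonneg (w t : ℝ) : 0 ≤ cauchyWeight w t := by
  unfold cauchyWeight; positivity

lemma cauchyWeight_le_two (w t : ℝ) : cauchyWeight w t ≤ 2 := by
  unfold cauchyWeight
  have h (x : ℝ) : (1 + x ^ 2)⁻¹ ≤ 1 := inv_le_one_of_one_le₀ (by nlinarith [sq_nonneg x])
  linarith [h (t - w), h (t + w)]

lemma integrable_inv_one_add_sub_sq (w : ℝ) : Integrable fun t : ℝ => (1 + (t - w) ^ 2)⁻¹ := by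
  simpa using integrable_inv_one_add_sq.comp_sub_right w

lemma integrable_inv_one_add_add_sq (w : ℝ) : Integrable fun t : ℝ => (1 + (t + w) ^ 2)⁻¹ := by
  simpa using integrable_inv_one_add_sq.comp_add_right w

lemma integrable_cauchyWeight (w : ℝ) : Integrable (cauchyWeight w) :=
  (integrable_inv_one_add_sub_sq w).add (integrable_inv_one_add_add_sq w)

lemma integral_cauchyWeight (w : ℝ) : ∫ t, cauchyWeight w t = 2 * Real.pi := by
  unfold cauchyWeight
  rw [integral_add (integrable_inv_one_add_sub_sq w) (integrable_inv_one_add_add_sq w),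
    integral_sub_right_eq_self (fun x : ℝ => (1 + x ^ 2)⁻¹) w,
    integral_add_right_eq_self (fun x : ℝ => (1 + x ^ 2)⁻¹) w, integral_univ_inv_one_add_sq]
  ring

lemma lintegral_ofReal_le_of_le_cauchyWeight {f : ℝ → ℝ} {c w : ℝ} (hc : 0 ≤ c)
    (hf : ∀ᵐ t, f t ≤ c * cauchyWeight w t) :
    ∫⁻ t, ENNReal.ofReal (f t) ≤ ENNReal.ofReal (2 * Real.pi * c) :=
  calc ∫⁻ t, ENNReal.ofReal (f t) ≤ ∫⁻ t, ENNReal.ofReal (c * cauchyWeight w t) :=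
        lintegral_mono_ae (hf.mono fun _ ht => ENNReal.ofReal_le_ofReal ht)
    _ = ENNReal.ofReal (2 * Real.pi * c) := by
        rw [← ofReal_integral_eq_lintegral_ofReal ((integrable_cauchyWeight w).const_mul c)
          (.of_forall fun t => mul_nonneg hc (cauchyWeight_nonneg w t)),
          integral_const_mul, integral_cauchyWeight, mul_comm]

lemma le_four_mul_cauchyWeight {k c w t : ℝ} (hc : 0 ≤ c) (h₀ : k ≤ 2 * c)
    (h₂ : k ≤ c * (|t - w| ^ (-2 : ℝ) + |t + w| ^ (-2 : ℝ))) :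
    k ≤ 4 * c * cauchyWeight w t := by
  have ha := Real.rpow_nonneg (abs_nonneg (t - w)) (-2)
  have hb := Real.rpow_nonneg (abs_nonneg (t + w)) (-2)
  calc k ≤ 2 * c * min 1 (|t - w| ^ (-2 : ℝ) + |t + w| ^ (-2 : ℝ)) := by
        rw [mul_min_of_nonneg _ _ (by positivity)]
        exact le_min (by linarith) (by nlinarith)
    _ ≤ 2 * c * (min 1 (|t - w| ^ (-2 : ℝ)) + min 1 (|t + w| ^ (-2 : ℝ))) := by
        gcongr; exact min_one_add_le_min_add_min ha hb
    _ ≤ 2 * c * (2 * (1 + (t - w) ^ 2)⁻¹ + 2 * (1 + (t + w) ^ 2)⁻¹) := by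
        gcongr <;> exact min_one_abs_rpow_neg_two_le _
    _ = 4 * c * cauchyWeight w t := by unfold cauchyWeight; ring

lemma rpow_mul_sq_le_of_abs_le {k c w t s : ℝ} (hs : 0 ≤ s) (ht : |t| ≤ 2 * w) (hk0 : 0 ≤ k)
    (hk : k ≤ 4 * c * cauchyWeight w t) :
    |t| ^ (2 * s) * k ^ 2 ≤ 2 ^ (2 * s) * 32 * c ^ 2 * w ^ (2 * s) * cauchyWeight w t := by
  have hw : 0 ≤ w := by linarith [abs_nonneg t]
  have hW := cauchyWeight_nonneg w t
  have hk2 : k ^ 2 ≤ 32 * c ^ 2 * cauchyWeight w t :=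
    calc k ^ 2 ≤ (4 * c * cauchyWeight w t) ^ 2 := pow_le_pow_left₀ hk0 hk 2
      _ = 16 * c ^ 2 * cauchyWeight w t * cauchyWeight w t := by ring
      _ ≤ 16 * c ^ 2 * cauchyWeight w t * 2 := by gcongr; exact cauchyWeight_le_two w t
      _ = 32 * c ^ 2 * cauchyWeight w t := by ring
  calc |t| ^ (2 * s) * k ^ 2 ≤ (2 * w) ^ (2 * s) * (32 * c ^ 2 * cauchyWeight w t) := by
        gcongr
    _ = 2 ^ (2 * s) * 32 * c ^ 2 * w ^ (2 * s) * cauchyWeight w t := by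
        rw [Real.mul_rpow (by norm_num) hw]; ring

lemma rpow_mul_sq_le_of_two_mul_le {k C w t s A : ℝ} {m : ℕ} (hw : 1 ≤ w) (ht : 2 * w ≤ |t|)
    (hsm : s ≤ m) (hC : 0 ≤ C) (hk0 : 0 ≤ k)
    (hk : k ≤ C * w ^ ((m : ℝ) - A) * |t| ^ (-(m : ℝ)) * (|t - w|⁻¹ + |t + w|⁻¹)) :
    |t| ^ (2 * s) * k ^ 2 ≤ 48 * C ^ 2 * w ^ (2 * s - 2 * A) * cauchyWeight w t := by
  have hw0 : 0 < w := by linarith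
  have ht0 : 0 < |t| := by linarith
  have hk' : k ≤ 4 * C * (w ^ (s - A) * |t| ^ (-s)) * |t|⁻¹ :=
    calc k ≤ C * w ^ ((m : ℝ) - A) * |t| ^ (-(m : ℝ)) * (4 * |t|⁻¹) := by
          refine hk.trans ?_
          gcongr
          exact inv_abs_sub_add_inv_abs_add_le hw0 ht
      _ = C * (w ^ ((m : ℝ) - A) * |t| ^ (-(m : ℝ))) * (4 * |t|⁻¹) := by ring
      _ ≤ C * (w ^ (s - A) * |t| ^ (-s)) * (4 * |t|⁻¹) := by
          gcongr C * ?_ * _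
          exact rpow_sub_mul_rpow_neg_le hw0 (by linarith) hsm
      _ = 4 * C * (w ^ (s - A) * |t| ^ (-s)) * |t|⁻¹ := by ring
  have hpow : |t| ^ (2 * s) * (w ^ (s - A) * |t| ^ (-s)) ^ 2 = w ^ (2 * s - 2 * A) := by
    rw [mul_pow, ← Real.rpow_mul_natCast hw0.le, ← Real.rpow_mul_natCast ht0.le,
      mul_left_comm, ← Real.rpow_add ht0,
      show 2 * s + -s * (2 : ℕ) = 0 by push_cast; ring, Real.rpow_zero, mul_one]
    ring_nf
  calc |t| ^ (2 * s) * k ^ 2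
      ≤ |t| ^ (2 * s) * (4 * C * (w ^ (s - A) * |t| ^ (-s)) * |t|⁻¹) ^ 2 := by
        gcongr
    _ = 16 * C ^ 2 * (|t| ^ (2 * s) * (w ^ (s - A) * |t| ^ (-s)) ^ 2) * (t ^ 2)⁻¹ := by
        rw [← sq_abs t]; ring
    _ ≤ 16 * C ^ 2 * w ^ (2 * s - 2 * A) * (3 * (1 + (t - w) ^ 2)⁻¹) := by
        rw [hpow]; gcongr; exact inv_sq_le_three_mul_inv_one_add_sq hw ht
    _ ≤ 48 * C ^ 2 * w ^ (2 * s - 2 * A) * cauchyWeight w t := by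
        unfold cauchyWeight
        have : 0 ≤ (1 + (t + w) ^ 2)⁻¹ := by positivity
        have : 0 ≤ C ^ 2 * w ^ (2 * s - 2 * A) := by positivity
        nlinarith

def KernelDecay (K : ℝ → ℝ → ℂ) (A : ℝ) : Prop :=
  ∀ m N : ℕ, ∃ C : ℝ, 0 < C ∧ ∀ w ≥ (1 : ℝ), ∀ t : ℝ, t ≠ 0 →
    ‖K w t‖ ≤ C * w ^ ((m : ℝ) - A) * |t| ^ (-(m : ℝ))
      * (|t - w| ^ (-(N : ℝ)) + |t + w| ^ (-(N : ℝ)))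

namespace KernelDecay

variable {K : ℝ → ℝ → ℂ} {A : ℝ}

theorem exists_norm_le_of_two_mul_le (hK : KernelDecay K A) (s : ℝ) :
    ∃ C : ℝ, 0 < C ∧ ∀ w ≥ (1 : ℝ), ∀ t : ℝ, 2 * w ≤ |t| →
      ‖K w t‖ ≤ C * |t| ^ (-s) * w ^ (s - A) := by
  obtain ⟨C, hC, hbound⟩ := hK ⌈s⌉₊ 0
  refine ⟨2 * C, by positivity, fun w hw t ht => ?_⟩
  have hwt : w ≤ |t| := by linarith
  have hb := hbound w hw t (abs_pos.1 (by linarith))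
  simp only [Nat.cast_zero, neg_zero, Real.rpow_zero] at hb
  calc ‖K w t‖ ≤ 2 * C * (w ^ ((⌈s⌉₊ : ℝ) - A) * |t| ^ (-(⌈s⌉₊ : ℝ))) := by linarith
    _ ≤ 2 * C * (w ^ (s - A) * |t| ^ (-s)) := by
        gcongr 2 * C * ?_
        exact rpow_sub_mul_rpow_neg_le (by linarith) hwt (Nat.le_ceil s)
    _ = 2 * C * |t| ^ (-s) * w ^ (s - A) := by ring

theorem exists_rpow_mul_sq_le_cauchyWeight (hK : KernelDecay K A) {s : ℝ} (hs : 0 ≤ s) :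
    ∃ D : ℝ, 0 < D ∧ ∀ w ≥ (1 : ℝ), ∀ t : ℝ, t ≠ 0 →
      |t| ^ (2 * s) * ‖K w t‖ ^ 2 ≤ D * w ^ (2 * s - 2 * A) * cauchyWeight w t := by
  obtain ⟨C₀, hC₀, hbound₀⟩ := hK 0 0
  obtain ⟨C₂, hC₂, hbound₂⟩ := hK 0 2
  obtain ⟨C₁, hC₁, hbound₁⟩ := hK ⌈s⌉₊ 1
  set D := 2 ^ (2 * s) * 32 * (C₀ + C₂) ^ 2 + 48 * C₁ ^ 2
  refine ⟨D, by positivity, fun w hw t ht => ?_⟩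
  have hw0 : 0 < w := by linarith
  have hW := cauchyWeight_nonneg w t
  rcases le_or_gt |t| (2 * w) with hnear | hfar
  · have hb₀ := hbound₀ w hw t ht
    have hb₂ := hbound₂ w hw t ht
    simp only [Nat.cast_zero, Nat.cast_ofNat, zero_sub, neg_zero, Real.rpow_zero, mul_one]
      at hb₀ hb₂
    have hk : ‖K w t‖ ≤ 4 * ((C₀ + C₂) * w ^ (-A)) * cauchyWeight w t :=
      le_four_mul_cauchyWeight (by positivity) (by nlinarith [Real.rpow_pos_of_pos hw0 (-A)])
        (hb₂.trans (by gcongr; linarith))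
    have hpow : w ^ (2 * s) * (w ^ (-A)) ^ 2 = w ^ (2 * s - 2 * A) := by
      rw [← Real.rpow_mul_natCast hw0.le, ← Real.rpow_add hw0]; push_cast; ring_nf
    calc |t| ^ (2 * s) * ‖K w t‖ ^ 2
        ≤ 2 ^ (2 * s) * 32 * ((C₀ + C₂) * w ^ (-A)) ^ 2 * w ^ (2 * s) * cauchyWeight w t :=
          rpow_mul_sq_le_of_abs_le hs hnear (norm_nonneg _) hk
      _ = 2 ^ (2 * s) * 32 * (C₀ + C₂) ^ 2 * w ^ (2 * s - 2 * A) * cauchyWeight w t := by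
          rw [← hpow]; ring
      _ ≤ D * w ^ (2 * s - 2 * A) * cauchyWeight w t := by
          gcongr; exact le_add_of_nonneg_right (by positivity)
  · have hb₁ := hbound₁ w hw t ht
    simp only [Nat.cast_one, Real.rpow_neg_one] at hb₁
    calc |t| ^ (2 * s) * ‖K w t‖ ^ 2 ≤ 48 * C₁ ^ 2 * w ^ (2 * s - 2 * A) * cauchyWeight w t :=
          rpow_mul_sq_le_of_two_mul_le hw hfar.le (Nat.le_ceil s) hC₁.le (norm_nonneg _) hb₁
      _ ≤ D * w ^ (2 * s - 2 * A) * cauchyWeight w t := by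
          gcongr; exact le_add_of_nonneg_left (by positivity)

theorem exists_lintegral_le (hK : KernelDecay K A) {s : ℝ} (hs : 0 ≤ s) :
    ∃ C : ℝ, 0 < C ∧ ∀ w ≥ (1 : ℝ),
      ∫⁻ t : ℝ, ENNReal.ofReal (|t| ^ (2 * s)) * (‖K w t‖₊ : ℝ≥0∞) ^ 2
        ≤ ENNReal.ofReal (C * w ^ (2 * s - 2 * A)) := by
  obtain ⟨D, hD, hbound⟩ := hK.exists_rpow_mul_sq_le_cauchyWeight hs
  refine ⟨2 * Real.pi * D, by positivity, fun w hw => ?_⟩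
  have hintegrand (t : ℝ) : ENNReal.ofReal (|t| ^ (2 * s)) * (‖K w t‖₊ : ℝ≥0∞) ^ 2
      = ENNReal.ofReal (|t| ^ (2 * s) * ‖K w t‖ ^ 2) := by
    rw [ENNReal.ofReal_mul (by positivity), ← enorm_eq_nnnorm, ← ofReal_norm,
      ← ENNReal.ofReal_pow (norm_nonneg _)]
  simp_rw [hintegrand, mul_assoc (2 * Real.pi)]
  refine lintegral_ofReal_le_of_le_cauchyWeight (w := w) (by positivity) ?_
  filter_upwards [Measure.ae_ne volume 0] with t ht
  exact hbound w hw t ht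

end KernelDecay

theorem stmt_18_general (n : ℕ) (K : ℝ → ℝ → ℂ)
    (hK : ∀ m N : ℕ, ∃ C : ℝ, 0 < C ∧ ∀ w ≥ (1 : ℝ), ∀ t : ℝ, t ≠ 0 →
      ‖K w t‖ ≤ C * w ^ ((m : ℝ) - ((n : ℝ) - 1) / 2) * |t| ^ (-(m : ℝ))
        * (|t - w| ^ (-(N : ℝ)) + |t + w| ^ (-(N : ℝ)))) :
    ∀ s : ℝ, 0 ≤ s → s ≤ ((n : ℝ) - 1) / 2 →
      (∃ Cs : ℝ, 0 < Cs ∧ ∀ w ≥ (1 : ℝ), ∀ t : ℝ, 2 * w ≤ |t| →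
        ‖K w t‖ ≤ Cs * |t| ^ (-s) * w ^ (s - ((n : ℝ) - 1) / 2)) ∧
      (∃ C : ℝ, 0 < C ∧ ∀ w ≥ (1 : ℝ),
        ∫⁻ t : ℝ, ENNReal.ofReal (|t| ^ (2 * s)) * (‖K w t‖₊ : ℝ≥0∞) ^ 2
          ≤ ENNReal.ofReal (C * w ^ (2 * s - (n : ℝ) + 1))) := by
  intro s hs _
  have hK' : KernelDecay K (((n : ℝ) - 1) / 2) := hK
  refine ⟨hK'.exists_norm_le_of_two_mul_le s, ?_⟩
  obtain ⟨C, hC, hbound⟩ := hK'.exists_lintegral_le hs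
  refine ⟨C, hC, fun w hw => (hbound w hw).trans_eq ?_⟩
  congr 3; ring

/-- if `|K(w,t)| ≤ C_{m,N} w^{m-(n-1)/2}|t|^{-m}(|t-w|^{-N}+|t+w|^{-N})`
for all integers `m, N ≥ 0`, then for `0 ≤ s ≤ (n-1)/2`:
`|K(w,t)| ≤ C_s |t|^{-s} w^{s-(n-1)/2}` for `|t| ≥ 2w`, and
`∫ |t|^{2s} |K(w,t)|² dt ≤ C w^{2s-n+1}`. -/
theorem stmt_18 (n : ℕ) (hn : 2 ≤ n) (K : ℝ → ℝ → ℂ) (hmeas : ∀ w, Measurable (K w))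
    (hK : ∀ m N : ℕ, ∃ C : ℝ, 0 < C ∧ ∀ w ≥ (1 : ℝ), ∀ t : ℝ, t ≠ 0 →
      ‖K w t‖ ≤ C * w ^ ((m : ℝ) - ((n : ℝ) - 1) / 2) * |t| ^ (-(m : ℝ))
        * (|t - w| ^ (-(N : ℝ)) + |t + w| ^ (-(N : ℝ)))) :
    ∀ s : ℝ, 0 ≤ s → s ≤ ((n : ℝ) - 1) / 2 →
      (∃ Cs : ℝ, 0 < Cs ∧ ∀ w ≥ (1 : ℝ), ∀ t : ℝ, 2 * w ≤ |t| →
        ‖K w t‖ ≤ Cs * |t| ^ (-s) * w ^ (s - ((n : ℝ) - 1) / 2)) ∧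
      (∃ C : ℝ, 0 < C ∧ ∀ w ≥ (1 : ℝ),
        ∫⁻ t : ℝ, ENNReal.ofReal (|t| ^ (2 * s)) * (‖K w t‖₊ : ℝ≥0∞) ^ 2
          ≤ ENNReal.ofReal (C * w ^ (2 * s - (n : ℝ) + 1))) :=
  stmt_18_general n K hK
end
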